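/- Let λ ∈ ℝⁿ with λ ≥ 0, let x ∈ M maximize ∑_i λ_i (u_i · y_i) over y ∈ M, and let i be an agent such that λ_i (u_{ij} − u_{iℓ}) > 1 for all goods j, ℓ with u_{ij} > u_{iℓ}. If ∑_j p_j(λ) ≤ 1, then u_i · x_i = max_j u_{ij}. -/

import Mathlib

open Finset

/-- Dot product of two vectors in `ℝⁿ`. -/
def dotp {n : ℕ} (a b : Fin n → ℝ) : ℝ := ∑ j, a j * b j

/-- Membership in `Δⁿ₋`: nonnegative with coordinate sum at most 1. -/
def InSimplexLe {n : ℕ} (y : Fin n → ℝ) : Prop := (∀ j, 0 ≤ y j) ∧ ∑ j, y j ≤ 1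

/-- The set `M` of allocations: nonnegative doubly stochastic matrices. -/
def IsAlloc {n : ℕ} (x : Fin n → Fin n → ℝ) : Prop :=
  (∀ i j, 0 ≤ x i j) ∧ (∀ i, ∑ j, x i j = 1) ∧ (∀ j, ∑ i, x i j = 1)

/-- The feasible set for the relaxed welfare problem where the supply of good `l`
is doubled. -/
def FeasRelax {n : ℕ} (l : Fin n) (x : Fin n → Fin n → ℝ) : Prop :=
  (∀ i j, 0 ≤ x i j) ∧ (∀ i, ∑ j, x i j ≤ 1) ∧
  (∀ j, j ≠ l → ∑ i, x i j ≤ 1) ∧ (∑ i, x i l ≤ 2)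

/-- `W(λ)`: the maximum weighted welfare over allocations. -/
noncomputable def Wval {n : ℕ} (u : Fin n → Fin n → ℝ) (lam : Fin n → ℝ) : ℝ :=
  sSup ((fun x => ∑ i, lam i * dotp (u i) (x i)) '' {x | IsAlloc x})

/-- `W_l(λ)`: the maximum weighted welfare when the supply of good `l` is doubled. -/
noncomputable def Wrelax {n : ℕ} (u : Fin n → Fin n → ℝ) (lam : Fin n → ℝ)
    (l : Fin n) : ℝ :=
  sSup ((fun x => ∑ i, lam i * dotp (u i) (x i)) '' {x | FeasRelax l x})

/-- The VCG price vector `p(λ)`, with `p_l(λ) = W_l(λ) − W(λ)`. -/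
noncomputable def vcg {n : ℕ} (u : Fin n → Fin n → ℝ) (lam : Fin n → ℝ) :
    Fin n → ℝ :=
  fun l => Wrelax u lam l - Wval u lam

/-! If agent `i` does not receive her favourite good `j`, she holds a positive share of some good
`l` with `u i l < u i j`. By Birkhoff's theorem the optimal allocation is a convex combination of
permutation matrices, all of which are then optimal, and one of them gives `l` to `i`. Giving `i`
a second copy of `j` instead is feasible once the supply of `j` is doubled, and raises the welfare
by `λ_i (u_ij - u_il) > 1`. Hence `p_j > 1`, while all prices are nonnegative. -/

theorem sum_update_eq_sum_add_sub {ι M : Type*} [Fintype ι] [DecidableEq ι] [AddCommGroup M]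
    (f : ι → M) (i : ι) (b : M) : ∑ k, Function.update f i b k = ∑ k, f k + (b - f i) := by
  rw [sum_update_of_mem (mem_univ i), sum_eq_add_sum_sdiff_singleton_of_mem (mem_univ i) f]
  abel

theorem eq_of_sum_mul_eq_of_le {ι : Type*} [Fintype ι] {w a : ι → ℝ} {c : ℝ}
    (hw0 : ∀ k, 0 ≤ w k) (hw1 : ∑ k, w k = 1) (hmean : ∑ k, w k * a k = c)
    (hle : ∀ k, a k ≤ c) {k : ι} (hk : w k ≠ 0) : a k = c := by
  have hgap : ∑ k, w k * (c - a k) = 0 := by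
    simp only [mul_sub, sum_sub_distrib, ← sum_mul, hw1, one_mul, hmean, sub_self]
  have hk0 := (sum_eq_zero_iff_of_nonneg fun k _ =>
    mul_nonneg (hw0 k) (sub_nonneg.2 (hle k))).1 hgap k (mem_univ k)
  linarith [(mul_eq_zero.1 hk0).resolve_left hk]

theorem Equiv.Perm.permMatrix_row {ι : Type*} [DecidableEq ι] (σ : Equiv.Perm ι) (k : ι) :
    σ.permMatrix ℝ k = Pi.single (σ k) 1 := by
  ext l
  simp [PEquiv.toMatrix_apply, Pi.single_apply, eq_comm]

theorem exists_perm_map_eq_of_isMaxOn {ι : Type*} [Fintype ι] [DecidableEq ι]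
    (f : Matrix ι ι ℝ →ₗ[ℝ] ℝ) {x : Matrix ι ι ℝ} (hx : x ∈ doublyStochastic ℝ ι)
    (hmax : IsMaxOn f (doublyStochastic ℝ ι) x) {k l : ι} (hkl : x k l ≠ 0) :
    ∃ σ : Equiv.Perm ι, σ k = l ∧ f (σ.permMatrix ℝ) = f x := by
  obtain ⟨w, hw0, hw1, rfl⟩ := exists_eq_sum_perm_of_mem_doublyStochastic hx
  have hkl' : ∑ σ, w σ * σ.permMatrix ℝ k l ≠ 0 := by simpa [Matrix.sum_apply] using hkl
  obtain ⟨σ, -, hσ⟩ := exists_ne_zero_of_sum_ne_zero hkl'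
  refine ⟨σ, by simpa using right_ne_zero_of_mul hσ, ?_⟩
  exact eq_of_sum_mul_eq_of_le (a := fun τ => f (τ.permMatrix ℝ)) hw0 hw1 (by simp [map_sum])
    (fun τ => isMaxOn_iff.1 hmax _ permMatrix_mem_doublyStochastic) (left_ne_zero_of_mul hσ)

theorem dotp_single_one {n : ℕ} (a : Fin n → ℝ) (j : Fin n) : dotp a (Pi.single j 1) = a j :=
  dotProduct_single_one a j

theorem dotp_eq_of_forall_ne_zero {n : ℕ} {a y : Fin n → ℝ} {c : ℝ} (hy : ∑ l, y l = 1)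
    (h : ∀ l, y l ≠ 0 → a l = c) : dotp a y = c := by
  calc dotp a y = ∑ l, c * y l := sum_congr rfl fun l _ => by
          by_cases hl : y l = 0
          · simp [hl]
          · rw [h l hl]
    _ = c := by rw [← mul_sum, hy, mul_one]

theorem isAlloc_iff_mem_doublyStochastic {n : ℕ} {x : Fin n → Fin n → ℝ} :
    IsAlloc x ↔ x ∈ doublyStochastic ℝ (Fin n) :=
  mem_doublyStochastic_iff_sum.symm

theorem FeasRelax.of_isAlloc {n : ℕ} {x : Fin n → Fin n → ℝ} (hx : IsAlloc x) (l : Fin n) :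
    FeasRelax l x :=
  ⟨hx.1, fun i => (hx.2.1 i).le, fun j _ => (hx.2.2 j).le, by rw [hx.2.2 l]; norm_num⟩

theorem FeasRelax.mem_Icc {n : ℕ} {l : Fin n} {x : Fin n → Fin n → ℝ} (hx : FeasRelax l x) :
    x ∈ Set.Icc 0 1 :=
  ⟨fun i j => hx.1 i j, fun i j =>
    (single_le_sum (fun k _ => hx.1 i k) (mem_univ j)).trans (hx.2.1 i)⟩

theorem feasRelax_update_single {n : ℕ} {y : Fin n → Fin n → ℝ} (hy : IsAlloc y) (i j : Fin n) :
    FeasRelax j (Function.update y i (Pi.single j 1)) := by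
  have hcol : ∀ g, ∑ k, Function.update y i (Pi.single j 1) k g =
      1 + ((Pi.single j 1 : Fin n → ℝ) g - y i g) := fun g => by
    rw [← hy.2.2 g, ← sum_update_eq_sum_add_sub]
    simp only [Function.apply_update (fun (_ : Fin n) (v : Fin n → ℝ) => v g)]
  refine ⟨fun k g => ?_, fun k => ?_, fun g hg => ?_, ?_⟩
  · rcases eq_or_ne k i with rfl | hk
    · simp only [Function.update_self, Pi.single_apply]; split_ifs <;> norm_num
    · simpa [hk] using hy.1 k g
  · rcases eq_or_ne k i with rfl | hk
    · simp
    · simpa [hk] using (hy.2.1 k).le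
  · simpa [hcol, hg] using hy.1 i g
  · rw [hcol, Pi.single_eq_same]; linarith [hy.1 i j]

section Welfare

variable {n : ℕ} (u : Fin n → Fin n → ℝ) (lam : Fin n → ℝ)

def welfare : Matrix (Fin n) (Fin n) ℝ →ₗ[ℝ] ℝ where
  toFun x := ∑ i, lam i * dotp (u i) (x i)
  map_add' x y := by simp [dotp, mul_add, sum_add_distrib]
  map_smul' c x := by simp [dotp, mul_sum, mul_left_comm]

theorem welfare_apply (x : Fin n → Fin n → ℝ) :
    welfare u lam x = ∑ i, lam i * dotp (u i) (x i) := rfl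

theorem welfare_update (y : Fin n → Fin n → ℝ) (i : Fin n) (r : Fin n → ℝ) :
    welfare u lam (Function.update y i r) =
      welfare u lam y + (lam i * dotp (u i) r - lam i * dotp (u i) (y i)) := by
  simp only [welfare_apply, Function.apply_update (fun k v => lam k * dotp (u k) v)]
  exact sum_update_eq_sum_add_sub _ _ _

theorem continuous_welfare : Continuous fun x : Fin n → Fin n → ℝ => welfare u lam x := by
  simp only [welfare_apply, dotp]
  fun_prop

theorem bddAbove_welfare_feasRelax (l : Fin n) :
    BddAbove (welfare u lam '' {x | FeasRelax l x}) :=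
  (isCompact_Icc.bddAbove_image (continuous_welfare u lam).continuousOn).mono
    (Set.image_mono fun _ hx => FeasRelax.mem_Icc hx)

theorem welfare_le_wrelax {l : Fin n} {z : Fin n → Fin n → ℝ} (hz : FeasRelax l z) :
    welfare u lam z ≤ Wrelax u lam l :=
  le_csSup (bddAbove_welfare_feasRelax u lam l) ⟨z, hz, rfl⟩

end Welfare

section Prices

variable {n : ℕ} {u : Fin n → Fin n → ℝ} {lam : Fin n → ℝ} {x : Fin n → Fin n → ℝ}

theorem wval_eq_welfare (hx : IsAlloc x)
    (hmax : ∀ y, IsAlloc y → welfare u lam y ≤ welfare u lam x) :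
    Wval u lam = welfare u lam x :=
  IsGreatest.csSup_eq ⟨⟨x, hx, rfl⟩, by rintro _ ⟨y, hy, rfl⟩; exact hmax y hy⟩

theorem vcg_nonneg (hx : IsAlloc x) (hmax : ∀ y, IsAlloc y → welfare u lam y ≤ welfare u lam x)
    (l : Fin n) : 0 ≤ vcg u lam l := by
  have hfeas := welfare_le_wrelax u lam (FeasRelax.of_isAlloc hx l)
  rw [vcg, wval_eq_welfare hx hmax]
  linarith

theorem le_vcg_of_ne_zero (hx : IsAlloc x)
    (hmax : ∀ y, IsAlloc y → welfare u lam y ≤ welfare u lam x) {i l : Fin n} (hil : x i l ≠ 0)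
    (j : Fin n) : lam i * (u i j - u i l) ≤ vcg u lam j := by
  obtain ⟨σ, hσi, hσ⟩ := exists_perm_map_eq_of_isMaxOn (welfare u lam)
    (isAlloc_iff_mem_doublyStochastic.1 hx)
    (isMaxOn_iff.2 fun y hy => hmax y (isAlloc_iff_mem_doublyStochastic.2 hy)) hil
  have hσalloc : IsAlloc (σ.permMatrix ℝ) :=
    isAlloc_iff_mem_doublyStochastic.2 permMatrix_mem_doublyStochastic
  have hfeas := welfare_le_wrelax u lam (feasRelax_update_single hσalloc i j)
  have hupd := welfare_update u lam (σ.permMatrix ℝ) i (Pi.single j 1)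
  rw [hσ, Equiv.Perm.permMatrix_row, dotp_single_one, dotp_single_one, hσi] at hupd
  rw [vcg, wval_eq_welfare hx hmax]
  linarith

end Prices

theorem small_prices_imply_favorite_good_general {n : ℕ}
    (u : Fin n → Fin n → ℝ)
    (lam : Fin n → ℝ)
    (x : Fin n → Fin n → ℝ) (hx : IsAlloc x)
    (hmax : ∀ y, IsAlloc y →
      ∑ i, lam i * dotp (u i) (y i) ≤ ∑ i, lam i * dotp (u i) (x i))
    (i : Fin n)
    (hbig : ∀ j l : Fin n, u i l < u i j → 1 < lam i * (u i j - u i l))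
    (hp : ∑ l, vcg u lam l ≤ 1) :
    IsGreatest (Set.range (u i)) (dotp (u i) (x i)) := by
  obtain ⟨j, -, hj⟩ := exists_max_image univ (u i) ⟨i, mem_univ i⟩
  have hfav : ∀ l, x i l ≠ 0 → u i l = u i j := by
    intro l hl
    by_contra hne
    have hprice := le_vcg_of_ne_zero hx hmax hl j
    have hsum := single_le_sum (fun l _ => vcg_nonneg hx hmax l) (mem_univ j)
    linarith [hbig j l (lt_of_le_of_ne (hj l (mem_univ l)) hne)]
  rw [dotp_eq_of_forall_ne_zero (hx.2.1 i) hfav]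
  exact ⟨⟨j, rfl⟩, by rintro _ ⟨l, rfl⟩; exact hj l (mem_univ l)⟩

/-- if the sum of the VCG prices is at most 1 and agent `i`'s weight is
large enough that `λ_i (u_{ij} − u_{iℓ}) > 1` whenever `u_{ij} > u_{iℓ}`, then at any
weighted-welfare-maximizing allocation agent `i` attains her favorite good's utility. -/
theorem small_prices_imply_favorite_good {n : ℕ} (hn : 0 < n)
    (u : Fin n → Fin n → ℝ) (hu : ∀ i j, 0 ≤ u i j)
    (lam : Fin n → ℝ) (hlam : ∀ i, 0 ≤ lam i)
    (x : Fin n → Fin n → ℝ) (hx : IsAlloc x)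
    (hmax : ∀ y, IsAlloc y →
      ∑ i, lam i * dotp (u i) (y i) ≤ ∑ i, lam i * dotp (u i) (x i))
    (i : Fin n)
    (hbig : ∀ j l : Fin n, u i l < u i j → 1 < lam i * (u i j - u i l))
    (hp : ∑ l, vcg u lam l ≤ 1) :
    IsGreatest (Set.range (u i)) (dotp (u i) (x i)) :=
  small_prices_imply_favorite_good_general u lam x hx hmax i hbig hp
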